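/- arXiv:1710.07919 — 2 statements merged into one kernel-verified Lean document; each statement's English description precedes it below -/
import Mathlib

section
/- Let s > δ > 0. There is a constant C = C(s, δ) such that for all nonnegative sequences (c_{j,λ})_{λ dyadic, λ ≥ 1} (j = 1, 2, 3): Σ_{λ₄ ≥ 1 dyadic} [ Σ' λ₄^s λ_med^δ c_{1,λ₁} c_{2,λ₂} c_{3,λ₃} ]² ≤ C ∏_{j=1}^3 ( Σ_{λ ≥ 1 dyadic} λ^{2s} c_{j,λ}² ), where the inner sum Σ' runs over dyadic λ₁, λ₂, λ₃ ≥ 1 such that each of λ₁, λ₂, λ₃, λ₄ is at most 3 times the maximum of the other three, and λ_med denotes the median of (λ₁, λ₂, λ₃). -/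
noncomputable section

open MeasureTheory Real Complex Matrix Function Set Filter
open scoped FourierTransform RealInnerProductSpace BigOperators ENNReal Topology

abbrev Rd := EuclideanSpace ℝ (Fin 3)
abbrev C4 := EuclideanSpace ℂ (Fin 4)

namespace Dirac3D

/-- The Japanese bracket `⟨ξ⟩ₘ = √(m² + |ξ|²)`. -/
def jap (m : ℝ) (ξ : Rd) : ℝ := Real.sqrt (m ^ 2 + ‖ξ‖ ^ 2)

/-- Numerical value of a sign (`true` = `+`, `false` = `-`). -/
def sg (ε : Bool) : ℝ := if ε then 1 else -1

/-- The Pauli matrices. -/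
def pauli : Fin 3 → Matrix (Fin 2) (Fin 2) ℂ :=
  ![!![0, 1; 1, 0], !![0, -Complex.I; Complex.I, 0], !![1, 0; 0, -1]]

/-- 4×4 matrix from 2×2 blocks. -/
def blk (A B C D : Matrix (Fin 2) (Fin 2) ℂ) : Matrix (Fin 4) (Fin 4) ℂ :=
  Matrix.reindex finSumFinEquiv finSumFinEquiv (Matrix.fromBlocks A B C D)

/-- γ⁰ = β. -/
def gamma0 : Matrix (Fin 4) (Fin 4) ℂ := blk 1 0 0 (-1)

/-- γ^j, j = 1,2,3. -/
def gammaSp (j : Fin 3) : Matrix (Fin 4) (Fin 4) ℂ := blk 0 (pauli j) (-(pauli j)) 0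

/-- α^j = γ⁰γ^j. -/
def alphaM (j : Fin 3) : Matrix (Fin 4) (Fin 4) ℂ := gamma0 * gammaSp j

/-- S_l = diag(σ_l, σ_l). -/
def spinM (l : Fin 3) : Matrix (Fin 4) (Fin 4) ℂ := blk (pauli l) 0 0 (pauli l)

/-- Matrix acting on a vector of `C4`. -/
def matVec (M : Matrix (Fin 4) (Fin 4) ℂ) (v : C4) : C4 :=
  (EuclideanSpace.equiv (Fin 4) ℂ).symm (M.mulVec (EuclideanSpace.equiv (Fin 4) ℂ v))

/-- The ℂ⁴ pairing ⟨u,v⟩ = Σ uᵢ conj(vᵢ). -/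
def innerC4 (u v : C4) : ℂ := ∑ i, u i * (starRingEnd ℂ) (v i)

/-- Fourier multiplier with 4×4 matrix symbol. -/
def fmul (σ : Rd → Matrix (Fin 4) (Fin 4) ℂ) (f : Rd → C4) : Rd → C4 :=
  𝓕⁻ fun ξ => matVec (σ ξ) (𝓕 f ξ)

/-- Fourier multiplier with scalar symbol. -/
def fmulC (σ : Rd → ℂ) (f : Rd → ℂ) : Rd → ℂ :=
  𝓕⁻ fun ξ => σ ξ * 𝓕 f ξ

/-- Symbol of the projection Π^±_m. -/
def projSymb (m : ℝ) (ε : Bool) (ξ : Rd) : Matrix (Fin 4) (Fin 4) ℂ :=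
  (2 : ℂ)⁻¹ • (1 + ((sg ε * (jap m ξ)⁻¹ : ℝ) : ℂ) •
      (∑ j, ((ξ j : ℝ) : ℂ) • alphaM j + ((m : ℝ) : ℂ) • gamma0))

/-- The projection operator Π^±_m(D). -/
def projOp (m : ℝ) (ε : Bool) (f : Rd → C4) : Rd → C4 := fmul (projSymb m ε) f

/-- The propagator S_m(t), Fourier multiplier with symbol e^{-it⟨ξ⟩ₘ}. -/
def Sprop (m t : ℝ) (f : Rd → C4) : Rd → C4 :=
  fmul (fun ξ => Complex.exp (-(Complex.I * t * jap m ξ)) • 1) f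

/-- Scalar version of the propagator. -/
def SpropC (m t : ℝ) (f : Rd → ℂ) : Rd → ℂ :=
  fmulC (fun ξ => Complex.exp (-(Complex.I * t * jap m ξ))) f

/-- The free Dirac propagator e^{-it(α·D+mβ)}. -/
def freeDirac (m t : ℝ) (f : Rd → C4) : Rd → C4 :=
  fmul (fun ξ => Complex.exp (-(Complex.I * t * jap m ξ)) • projSymb m true ξ +
      Complex.exp (Complex.I * t * jap m ξ) • projSymb m false ξ) f


/-- Spatial L² norm (possibly infinite). -/
def L2 {E : Type*} [NormedAddCommGroup E] (f : Rd → E) : ℝ≥0∞ := eLpNorm f 2 volume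

/-- Space-time L²_{t,x} norm (possibly infinite). -/
def L2st {E : Type*} [NormedAddCommGroup E] (u : ℝ → Rd → E) : ℝ≥0∞ :=
  eLpNorm (fun p : ℝ × Rd => u p.1 p.2) 2 volume

/-- Mixed L^q_t L^r_x norm. -/
def eLqLr (q r : ℝ) (u : ℝ → Rd → ℂ) : ℝ≥0∞ :=
  eLpNorm (fun t => (eLpNorm (u t) (ENNReal.ofReal r) volume).toReal)
    (ENNReal.ofReal q) volume

/-- The step function determined by partition points `t` (in `EReal`) and values `φ`. -/
def stepFun {E : Type*} [NormedAddCommGroup E] {K : ℕ} (t : Fin (K + 1) → EReal)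
    (φ : Fin K → Rd → E) : ℝ → Rd → E := fun s =>
  ∑ k : Fin K, if t k.castSucc ≤ (s : EReal) ∧ (s : EReal) < t k.succ then φ k else 0

/-- `a` is a `U^p` atom. -/
def IsUpAtom {E : Type*} [NormedAddCommGroup E] (p : ℝ) (a : ℝ → Rd → E) : Prop :=
  ∃ (K : ℕ) (t : Fin (K + 1) → EReal) (φ : Fin K → Rd → E),
    StrictMono t ∧ t 0 ≠ ⊥ ∧ (∀ k : Fin K, t k.castSucc ≠ ⊤) ∧
    (∀ k, MemLp (φ k) 2 volume) ∧
    (∑ k, (L2 (φ k)).toReal ^ p) = 1 ∧ a = stepFun t φ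

/-- `u` has a `U^p`-atomic representation of total coefficient mass `r`. -/
def HasUpRep {E : Type*} [NormedAddCommGroup E] [NormedSpace ℝ E] (p : ℝ)
    (u : ℝ → Rd → E) (r : ℝ) : Prop :=
  ∃ (c : ℕ → ℝ) (a : ℕ → ℝ → Rd → E), (∀ j, IsUpAtom p (a j)) ∧
    Summable (fun j => |c j|) ∧ (∑' j, |c j|) = r ∧
    ∀ s x, HasSum (fun j => c j • a j s x) (u s x)

/-- Membership in the atomic space `U^p`. -/
def MemUp {E : Type*} [NormedAddCommGroup E] [NormedSpace ℝ E] (p : ℝ)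
    (u : ℝ → Rd → E) : Prop := ∃ r, HasUpRep p u r

/-- The `U^p` norm. -/
def UpNorm {E : Type*} [NormedAddCommGroup E] [NormedSpace ℝ E] (p : ℝ)
    (u : ℝ → Rd → E) : ℝ := sInf {r | HasUpRep p u r}

/-- Extension of `v` to `EReal`, vanishing at `±∞`. -/
def vext {E : Type*} [NormedAddCommGroup E] (v : ℝ → Rd → E) (s : EReal) : Rd → E :=
  if s = ⊤ ∨ s = ⊥ then 0 else v s.toReal

/-- The set of p-variation sums of `v` over finite partitions (with `t_K ≤ ∞`). -/
def VpSet {E : Type*} [NormedAddCommGroup E] (p : ℝ) (v : ℝ → Rd → E) : Set ℝ :=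
  {r | ∃ (K : ℕ) (t : Fin (K + 1) → EReal), 0 < K ∧ StrictMono t ∧ t 0 ≠ ⊥ ∧
    (∀ k : Fin K, t k.castSucc ≠ ⊤) ∧
    r = (∑ k : Fin K,
        (L2 (fun x => vext v (t k.succ) x - vext v (t k.castSucc) x)).toReal ^ p) ^ (1 / p)}

/-- `v` has bounded p-variation. -/
def MemVp {E : Type*} [NormedAddCommGroup E] (p : ℝ) (v : ℝ → Rd → E) : Prop :=
  BddAbove (VpSet p v)

/-- The `V^p` norm. -/
def VpNorm {E : Type*} [NormedAddCommGroup E] (p : ℝ) (v : ℝ → Rd → E) : ℝ :=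
  sSup (VpSet p v)

/-- Adapted norm ‖u‖_{U^p_±} = ‖t ↦ S_m(∓t)u(t)‖_{U^p}. -/
def UpNormA (m : ℝ) (ε : Bool) (p : ℝ) (u : ℝ → Rd → C4) : ℝ :=
  UpNorm p fun t => Sprop m (-(sg ε) * t) (u t)

def MemUpA (m : ℝ) (ε : Bool) (p : ℝ) (u : ℝ → Rd → C4) : Prop :=
  MemUp p fun t => Sprop m (-(sg ε) * t) (u t)

def VpNormA (m : ℝ) (ε : Bool) (p : ℝ) (u : ℝ → Rd → C4) : ℝ :=
  VpNorm p fun t => Sprop m (-(sg ε) * t) (u t)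

def MemVpA (m : ℝ) (ε : Bool) (p : ℝ) (u : ℝ → Rd → C4) : Prop :=
  MemVp p fun t => Sprop m (-(sg ε) * t) (u t)

/-- Scalar versions of the adapted norms. -/
def UpNormAC (m : ℝ) (ε : Bool) (p : ℝ) (u : ℝ → Rd → ℂ) : ℝ :=
  UpNorm p fun t => SpropC m (-(sg ε) * t) (u t)

def MemUpAC (m : ℝ) (ε : Bool) (p : ℝ) (u : ℝ → Rd → ℂ) : Prop :=
  MemUp p fun t => SpropC m (-(sg ε) * t) (u t)

/-- χ is an even smooth bump, supported in (-2,2), equal to 1 on [-1,1]. -/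
def IsCutoff (χ : ℝ → ℝ) : Prop :=
  ContDiff ℝ (⊤ : ℕ∞) χ ∧ HasCompactSupport χ ∧ Function.support χ ⊆ Set.Ioo (-2) 2 ∧
  (∀ s, χ (-s) = χ s) ∧ ∀ s, |s| ≤ 1 → χ s = 1

/-- The Littlewood–Paley symbol ρ_λ (for dyadic λ ≥ 1). -/
def rhoSymb (χ : ℝ → ℝ) (lam s : ℝ) : ℝ :=
  if lam = 1 then χ s else χ (s / lam) - χ (2 * s / lam)

/-- The modulation symbol σ_λ (for all dyadic λ > 0). -/
def sigmaSymb (χ : ℝ → ℝ) (lam s : ℝ) : ℝ := χ (s / lam) - χ (2 * s / lam)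

/-- Littlewood–Paley projection P_λ (C⁴-valued). -/
def LP (χ : ℝ → ℝ) (lam : ℝ) (f : Rd → C4) : Rd → C4 :=
  𝓕⁻ fun ξ => ((rhoSymb χ lam ‖ξ‖ : ℝ) : ℂ) • 𝓕 f ξ

/-- Littlewood–Paley projection P_λ (scalar-valued). -/
def LPC (χ : ℝ → ℝ) (lam : ℝ) (f : Rd → ℂ) : Rd → ℂ :=
  𝓕⁻ fun ξ => ((rhoSymb χ lam ‖ξ‖ : ℝ) : ℂ) * 𝓕 f ξ

/-- `f` is frequency-localized at dyadic λ ≥ 1. -/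
def FreqLoc {E : Type*} [NormedAddCommGroup E] [NormedSpace ℂ E] [CompleteSpace E]
    (lam : ℝ) (f : Rd → E) : Prop :=
  ∀ ξ : Rd, 𝓕 f ξ ≠ 0 →
    (lam = 1 → ‖ξ‖ ≤ 2) ∧ (lam ≠ 1 → lam / 2 ≤ ‖ξ‖ ∧ ‖ξ‖ ≤ 2 * lam)

/-- A space-time function frequency-localized at λ (at every time). -/
def FreqLocT {E : Type*} [NormedAddCommGroup E] [NormedSpace ℂ E] [CompleteSpace E]
    (lam : ℝ) (u : ℝ → Rd → E) : Prop := ∀ t, FreqLoc lam (u t)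

set_option linter.dupNamespace false

/-- The Yukawa potential. -/
def Yuk (x : Rd) : ℝ := Real.exp (-‖x‖) / ‖x‖

/-- Convolution with the Yukawa potential. -/
def convY (h : Rd → ℂ) (x : Rd) : ℂ := ∫ y : Rd, ((Yuk (x - y) : ℝ) : ℂ) * h y

/-- The pairing y ↦ ⟨βψ(y), φ(y)⟩. -/
def dirInner (ψ φ : Rd → C4) (y : Rd) : ℂ := innerC4 (matVec gamma0 (ψ y)) (φ y)

/-- η̂ = η/⟨η⟩ₘ. -/
def nhat (m : ℝ) (η : Rd) : Rd := (jap m η)⁻¹ • η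

/-- Cross product of vectors in ℝ³. -/
def cross3 (a b : Rd) : Fin 3 → ℝ :=
  ![a 1 * b 2 - a 2 * b 1, a 2 * b 0 - a 0 * b 2, a 0 * b 1 - a 1 * b 0]

/-- The null symbols q_j^± (j = 1,2,3 indexed by `Fin 3`). -/
def qSymb (m : ℝ) (ε : Bool) (η ζ : Rd) : Fin 3 → Matrix (Fin 4) (Fin 4) ℂ :=
  ![(((‖nhat m η‖ * ‖nhat m ζ‖ - sg ε * ⟪nhat m η, nhat m ζ⟫ : ℝ)) : ℂ) • 1,
    -(∑ i, (((nhat m η) i * ‖nhat m ζ‖ - sg ε * (nhat m ζ) i * ‖nhat m η‖ : ℝ) : ℂ) • alphaM i),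
    (((-(sg ε) : ℝ) : ℂ) * Complex.I) •
      ∑ l, ((cross3 (nhat m η) (nhat m ζ) l : ℝ) : ℂ) • spinM l]

/-- The remainder symbols b_j^± (j = 1,2,3,4 indexed by `Fin 4`). -/
def bSymb (m : ℝ) (ε : Bool) (η ζ : Rd) : Fin 4 → Matrix (Fin 4) (Fin 4) ℂ :=
  ![(((1 - ‖nhat m η‖ * ‖nhat m ζ‖ : ℝ)) : ℂ) • 1,
    -((((jap m η * jap m ζ)⁻¹ : ℝ) : ℂ) •
      ∑ i, (((η i * (jap m ζ - ‖ζ‖) - sg ε * ζ i * (jap m η - ‖η‖)) : ℝ) : ℂ) • alphaM i),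
    (((-(sg ε) * (jap m η * jap m ζ)⁻¹ : ℝ)) : ℂ) •
      ((∑ i, (((η i - ζ i : ℝ)) : ℂ) • alphaM i) * (((m : ℝ) : ℂ) • gamma0)
        - (((jap m η - sg ε * jap m ζ : ℝ)) : ℂ) • (((m : ℝ) : ℂ) • gamma0)
        + (((m ^ 2 : ℝ)) : ℂ) • 1),
    (((m * (jap m η)⁻¹ : ℝ)) : ℂ) • gamma0]

/-- Generic bilinear operator with matrix symbol q(η,ζ):
`𝓕ₓ[T(ψ,φ)](ξ) = ∫ ⟨βψ̂(η), q(η, η-ξ) φ̂(η-ξ)⟩ dη`. -/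
def bilinOp (q : Rd → Rd → Matrix (Fin 4) (Fin 4) ℂ) (ψ φ : Rd → C4) : Rd → ℂ :=
  𝓕⁻ fun ξ => ∫ η : Rd, innerC4 (matVec gamma0 (𝓕 ψ η)) (matVec (q η (η - ξ)) (𝓕 φ (η - ξ)))

/-- The null form Q_j^± applied to space-time spinor fields. -/
def QForm (j : Fin 3) (m : ℝ) (ε : Bool) (u v : ℝ → Rd → C4) : ℝ → Rd → ℂ :=
  fun t => bilinOp (fun η ζ => qSymb m ε η ζ j) (u t) (v t)

/-- The remainder bilinear form B_j^± applied to space-time spinor fields. -/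
def BForm (j : Fin 4) (m : ℝ) (ε : Bool) (u v : ℝ → Rd → C4) : ℝ → Rd → ℂ :=
  fun t => bilinOp (fun η ζ => bSymb m ε η ζ j) (u t) (v t)

/-- Operator (ℓ²→ℓ²) norm of a 4×4 complex matrix. -/
def matNorm (M : Matrix (Fin 4) (Fin 4) ℂ) : ℝ :=
  ‖LinearMap.toContinuousLinearMap (Matrix.toEuclideanLin M)‖

/-- Space-time Fourier transform ũ(τ,ξ). -/
def stFT (u : ℝ → Rd → C4) (τ : ℝ) (ξ : Rd) : C4 := 𝓕 (fun t => 𝓕 (u t) ξ) τ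

/-- The modulation projection Λ^±_λ, with symbol σ_λ(|τ ± ⟨ξ⟩ₘ|). -/
def modProj (m : ℝ) (ε : Bool) (χ : ℝ → ℝ) (lam : ℝ) (u : ℝ → Rd → C4) :
    ℝ → Rd → C4 := fun t x =>
  𝓕⁻ (fun τ => 𝓕⁻ (fun ξ =>
      ((sigmaSymb χ lam |τ + sg ε * jap m ξ| : ℝ) : ℂ) • stFT u τ ξ) x) t

/-- The high-modulation projection Λ^±_{≥λ} = Σ_{dyadic μ ≥ λ} Λ^±_μ. -/
def modProjGE (m : ℝ) (ε : Bool) (χ : ℝ → ℝ) (lam : ℝ) (u : ℝ → Rd → C4) :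
    ℝ → Rd → C4 := fun t x => ∑' n : ℕ, modProj m ε χ (lam * 2 ^ n) u t x

/-- The low-modulation projection Λ^±_{<λ} = Id − Λ^±_{≥λ}. -/
def modProjLT (m : ℝ) (ε : Bool) (χ : ℝ → ℝ) (lam : ℝ) (u : ℝ → Rd → C4) :
    ℝ → Rd → C4 := fun t x => u t x - modProjGE m ε χ lam u t x

/-- Membership in H^s. -/
def MemHs (s : ℝ) (f : Rd → C4) : Prop :=
  Integrable (fun ξ : Rd => (1 + ‖ξ‖ ^ 2) ^ s * ‖𝓕 f ξ‖ ^ 2)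

/-- The H^s norm, computed on the Fourier side. -/
def HsNorm (s : ℝ) (f : Rd → C4) : ℝ :=
  Real.sqrt (∫ ξ : Rd, (1 + ‖ξ‖ ^ 2) ^ s * ‖𝓕 f ξ‖ ^ 2)

/-- The X^s_± norm: ‖u‖² = Σ_{dyadic λ ≥ 1} λ^{2s} ‖1_{[0,∞)} P_λ u‖²_{U²_±}. -/
def XsNorm (m : ℝ) (ε : Bool) (s : ℝ) (χ : ℝ → ℝ) (u : ℝ → Rd → C4) : ℝ≥0∞ :=
  (∑' n : ℕ, ENNReal.ofReal ((((2 : ℝ) ^ n) ^ (2 * s)) *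
    (UpNormA m ε 2 (fun t => if 0 ≤ t then LP χ ((2 : ℝ) ^ n) (u t) else 0)) ^ 2)) ^
      ((1 : ℝ) / 2)

/-- Membership in X^s_±. -/
def MemXs (m : ℝ) (ε : Bool) (s : ℝ) (χ : ℝ → ℝ) (u : ℝ → Rd → C4) : Prop :=
  (∀ n : ℕ, MemUpA m ε 2 (fun t => if 0 ≤ t then LP χ ((2 : ℝ) ^ n) (u t) else 0)) ∧
  XsNorm m ε s χ u ≠ ⊤

/-- The Hartree-type nonlinearity (V ∗ ⟨βψ₁,ψ₂⟩) βψ₃. -/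
def nonlin (ψ₁ ψ₂ ψ₃ : ℝ → Rd → C4) (t : ℝ) (y : Rd) : C4 :=
  convY (dirInner (ψ₁ t) (ψ₂ t)) y • matVec gamma0 (ψ₃ t y)

/-- Duhamel term i Π^±ₘ(D) ∫₀ᵗ S_m(±(t−t')) F(t') dt'. -/
def duhamel (m : ℝ) (ε : Bool) (F : ℝ → Rd → C4) (t : ℝ) : Rd → C4 := fun x =>
  Complex.I • projOp m ε (fun y => ∫ t' in (0 : ℝ)..t, Sprop m (sg ε * (t - t')) (F t') y) x

/-- The quadrilinear space-time integral |∫ (V∗⟨βu₁,u₂⟩)·⟨βu₃,u₄⟩ dt dx|. -/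
def quadI (u₁ u₂ u₃ u₄ : ℝ → Rd → C4) : ℝ :=
  ‖∫ p : ℝ × Rd, convY (dirInner (u₁ p.1) (u₂ p.1)) p.2 * dirInner (u₃ p.1) (u₄ p.1) p.2‖

/-- The median of three reals. -/
def med3 (a b c : ℝ) : ℝ := a + b + c - max a (max b c) - min a (min b c)

/-- The cube C_z = μz + [0,μ)³. -/
def inCube (mu : ℝ) (z : Fin 3 → ℤ) (ξ : Rd) : Prop :=
  ∀ i : Fin 3, mu * z i ≤ ξ i ∧ ξ i < mu * z i + mu

end Dirac3D

namespace Dirac3D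

open scoped Classical

/-- The frequency-compatibility condition: each of the four dyadic numbers is at most
3 times the maximum of the other three. -/
def dyCompat (a b c d : ℝ) : Prop :=
  a ≤ 3 * max b (max c d) ∧ b ≤ 3 * max a (max c d) ∧
  c ≤ 3 * max a (max b d) ∧ d ≤ 3 * max a (max b c)

private lemma two_pow_mono : Monotone (fun n : ℕ => (2:ℝ) ^ n) :=
  fun _ _ h => pow_le_pow_right₀ one_le_two h

private lemma two_pow_max (a b : ℕ) :
    max ((2:ℝ) ^ a) ((2:ℝ) ^ b) = (2:ℝ) ^ (max a b) := (two_pow_mono.map_max).symm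

private lemma two_pow_min (a b : ℕ) :
    min ((2:ℝ) ^ a) ((2:ℝ) ^ b) = (2:ℝ) ^ (min a b) := (two_pow_mono.map_min).symm

private lemma med3_two_pow (a b c : ℕ) :
    med3 ((2:ℝ) ^ a) ((2:ℝ) ^ b) ((2:ℝ) ^ c)
      = (2:ℝ) ^ (a + b + c - max a (max b c) - min a (min b c)) := by
  unfold med3
  rw [two_pow_max b c, two_pow_max a (max b c), two_pow_min b c, two_pow_min a (min b c)]
  rcases le_total a b with hab | hab
  · rcases le_total b c with hbc | hbc
    · rw [show max a (max b c) = c by omega, show min a (min b c) = a by omega,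
        show a + b + c - c - a = b by omega]; ring
    · rcases le_total a c with hac | hac
      · rw [show max a (max b c) = b by omega, show min a (min b c) = a by omega,
          show a + b + c - b - a = c by omega]; ring
      · rw [show max a (max b c) = b by omega, show min a (min b c) = c by omega,
          show a + b + c - b - c = a by omega]; ring
  · rcases le_total a c with hac | hac
    · rw [show max a (max b c) = c by omega, show min a (min b c) = b by omega,
        show a + b + c - c - b = a by omega]; ring
    · rcases le_total b c with hbc | hbc
      · rw [show max a (max b c) = a by omega, show min a (min b c) = b by omega,
          show a + b + c - a - b = c by omega]; ring
      · rw [show max a (max b c) = a by omega, show min a (min b c) = c by omega,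
          show a + b + c - a - c = b by omega]; ring

private def phi (x : ℝ) : ℝ≥0∞ := ENNReal.ofReal ((2:ℝ) ^ x)

private lemma phi_mono {x y : ℝ} (h : x ≤ y) : phi x ≤ phi y :=
  ENNReal.ofReal_le_ofReal ((Real.rpow_le_rpow_left_iff one_lt_two).2 h)

private lemma phi_add (x y : ℝ) : phi (x + y) = phi x * phi y := by
  unfold phi
  rw [Real.rpow_add two_pos, ENNReal.ofReal_mul (Real.rpow_nonneg (by norm_num) _)]

private lemma phi_pow (x : ℝ) (n : ℕ) : phi x ^ n = phi ((n : ℝ) * x) := by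
  unfold phi
  rw [← ENNReal.ofReal_pow (Real.rpow_nonneg (by norm_num) _),
    ← Real.rpow_natCast ((2:ℝ) ^ x) n, ← Real.rpow_mul (by norm_num : (0:ℝ) ≤ 2), mul_comm]

private lemma phi_lt_one {x : ℝ} (hx : x < 0) : phi x < 1 := by
  unfold phi
  rw [← ENNReal.ofReal_one]
  exact (ENNReal.ofReal_lt_ofReal_iff (by norm_num)).2
    (Real.rpow_lt_one_of_one_lt_of_neg one_lt_two hx)

private lemma phi_ne_top (x : ℝ) : phi x ≠ ⊤ := ENNReal.ofReal_ne_top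

private lemma ofReal_pow_rpow (n : ℕ) (t : ℝ) :
    ENNReal.ofReal (((2:ℝ) ^ n) ^ t) = phi ((n : ℝ) * t) := by
  unfold phi
  rw [← Real.rpow_natCast 2 n, ← Real.rpow_mul (by norm_num : (0:ℝ) ≤ 2)]

private lemma tsum_tail_le (A q : ℝ≥0∞) (t : ℕ) (f : ℕ → ℝ≥0∞)
    (hf : ∀ n, f n ≤ if t ≤ n then A * q ^ (n - t) else 0) :
    ∑' n, f n ≤ A * (1 - q)⁻¹ := by
  have h1 : ∑' n, f n ≤ ∑' n : ℕ, (if t ≤ n then A * q ^ (n - t) else 0) :=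
    ENNReal.tsum_le_tsum hf
  have hsupp : Function.support (fun n : ℕ => if t ≤ n then A * q ^ (n - t) else 0)
      ⊆ Set.range (fun m : ℕ => m + t) := by
    intro n hn
    by_cases h : t ≤ n
    · exact ⟨n - t, by show n - t + t = n; omega⟩
    · simp only [Function.mem_support, if_neg h, ne_eq, not_true_eq_false] at hn
  have h2 := Function.Injective.tsum_eq (g := fun m : ℕ => m + t)
    (add_left_injective t) hsupp
  have h3 : ∑' m : ℕ, (if t ≤ m + t then A * q ^ (m + t - t) else 0)
      = ∑' m : ℕ, A * q ^ m := by
    apply tsum_congr; intro m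
    rw [if_pos (by omega), Nat.add_sub_cancel]
  calc ∑' n, f n ≤ ∑' n : ℕ, (if t ≤ n then A * q ^ (n - t) else 0) := h1
    _ = ∑' m : ℕ, (if t ≤ m + t then A * q ^ (m + t - t) else 0) := h2.symm
    _ = ∑' m : ℕ, A * q ^ m := h3
    _ = A * ∑' n : ℕ, q ^ n := ENNReal.tsum_mul_left
    _ = A * (1 - q)⁻¹ := by rw [ENNReal.tsum_geometric]

private lemma tsum_reflect_le (A q : ℝ≥0∞) (N : ℕ) (f : ℕ → ℝ≥0∞)
    (hf : ∀ n, f n ≤ if n ≤ N then A * q ^ (N - n) else 0) :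
    ∑' n, f n ≤ A * (1 - q)⁻¹ := by
  have h1 : ∑' n, f n ≤ ∑' n : ℕ, (if n ≤ N then A * q ^ (N - n) else 0) :=
    ENNReal.tsum_le_tsum hf
  have h2 : ∑' n : ℕ, (if n ≤ N then A * q ^ (N - n) else 0)
      = ∑ n ∈ Finset.range (N + 1), (if n ≤ N then A * q ^ (N - n) else 0) := by
    apply tsum_eq_sum
    intro b hb
    rw [if_neg]
    intro h
    exact hb (Finset.mem_range.2 (by omega))
  have h3 : ∑ n ∈ Finset.range (N + 1), (if n ≤ N then A * q ^ (N - n) else 0)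
      = ∑ n ∈ Finset.range (N + 1), A * q ^ (N - n) := by
    apply Finset.sum_congr rfl
    intro i hi
    rw [if_pos (Nat.lt_succ_iff.mp (Finset.mem_range.1 hi))]
  have h4 : ∑ n ∈ Finset.range (N + 1), A * q ^ (N - n)
      = ∑ n ∈ Finset.range (N + 1), A * q ^ n := by
    have := Finset.sum_range_reflect (fun j => A * q ^ j) (N + 1)
    simpa using this
  calc ∑' n, f n ≤ _ := h1
    _ = ∑ n ∈ Finset.range (N + 1), A * q ^ n := by rw [h2, h3, h4]
    _ ≤ ∑' n : ℕ, A * q ^ n := ENNReal.sum_le_tsum _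
    _ = A * (1 - q)⁻¹ := by rw [ENNReal.tsum_mul_left, ENNReal.tsum_geometric]

private lemma tsum_triple (f g h : ℕ → ℝ≥0∞) :
    ∑' k : ℕ × ℕ × ℕ, f k.1 * (g k.2.1 * h k.2.2)
      = (∑' n, f n) * ((∑' n, g n) * (∑' n, h n)) := by
  rw [ENNReal.tsum_prod (f := fun a (bc : ℕ × ℕ) => f a * (g bc.1 * h bc.2))]
  calc ∑' a, ∑' p : ℕ × ℕ, f a * (g p.1 * h p.2)
      = ∑' a, f a * ∑' p : ℕ × ℕ, g p.1 * h p.2 :=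
        tsum_congr fun a => ENNReal.tsum_mul_left
    _ = (∑' n, f n) * ∑' p : ℕ × ℕ, g p.1 * h p.2 := ENNReal.tsum_mul_right
    _ = _ := by
        congr 1
        rw [ENNReal.tsum_prod (f := fun b c => g b * h c)]
        calc ∑' b, ∑' c2, g b * h c2
            = ∑' b, g b * ∑' c2, h c2 := tsum_congr fun b => ENNReal.tsum_mul_left
          _ = _ := ENNReal.tsum_mul_right

private lemma mul_le_sq_add_sq (x y : ℝ≥0∞) : x * y ≤ x ^ 2 + y ^ 2 := by
  rcases le_total x y with h | h
  · calc x * y ≤ y * y := mul_le_mul_left h _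
      _ = y ^ 2 := (sq y).symm
      _ ≤ x ^ 2 + y ^ 2 := le_add_self
  · calc x * y ≤ x * x := mul_le_mul_right h _
      _ = x ^ 2 := (sq x).symm
      _ ≤ x ^ 2 + y ^ 2 := le_self_add

private lemma sq_tsum (w d : (ℕ × ℕ × ℕ) → ℝ≥0∞) :
    (∑' k, w k * d k) ^ 2 = ∑' k, ∑' k', (w k * d k) * (w k' * d k') := by
  rw [sq, ← ENNReal.tsum_mul_right]
  exact tsum_congr fun k => ENNReal.tsum_mul_left.symm

private lemma double_sum_eq (w d : (ℕ × ℕ × ℕ) → ℝ≥0∞) :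
    ∑' k, ∑' k', (w k * w k') * (d k ^ 2 + d k' ^ 2)
      = 2 * ((∑' k', w k') * ∑' k, w k * d k ^ 2) := by
  have h1 : ∀ k, ∑' k', (w k * w k') * (d k ^ 2 + d k' ^ 2)
      = (w k * d k ^ 2) * (∑' k', w k') + w k * (∑' k', w k' * d k' ^ 2) := by
    intro k
    calc ∑' k', (w k * w k') * (d k ^ 2 + d k' ^ 2)
        = ∑' k', ((w k * d k ^ 2) * w k' + w k * (w k' * d k' ^ 2)) :=
          tsum_congr fun k' => by ring
      _ = (∑' k', (w k * d k ^ 2) * w k') + ∑' k', w k * (w k' * d k' ^ 2) :=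
          ENNReal.tsum_add
      _ = (w k * d k ^ 2) * (∑' k', w k') + w k * (∑' k', w k' * d k' ^ 2) := by
          rw [ENNReal.tsum_mul_left, ENNReal.tsum_mul_left]
  calc ∑' k, ∑' k', (w k * w k') * (d k ^ 2 + d k' ^ 2)
      = ∑' k, ((w k * d k ^ 2) * (∑' k', w k') + w k * (∑' k', w k' * d k' ^ 2)) :=
        tsum_congr h1
    _ = (∑' k, (w k * d k ^ 2) * (∑' k', w k')) + ∑' k, w k * (∑' k', w k' * d k' ^ 2) :=
        ENNReal.tsum_add
    _ = (∑' k', w k') * (∑' k, w k * d k ^ 2) + (∑' k, w k) * (∑' k', w k' * d k' ^ 2) := by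
        rw [ENNReal.tsum_mul_right, ENNReal.tsum_mul_right]; ring
    _ = 2 * ((∑' k', w k') * ∑' k, w k * d k ^ 2) := by ring

private lemma compat_le (a b c k4 : ℕ)
    (h : dyCompat ((2:ℝ) ^ a) ((2:ℝ) ^ b) ((2:ℝ) ^ c) ((2:ℝ) ^ k4)) :
    k4 ≤ max a (max b c) + 1 := by
  have h4 := h.2.2.2
  rw [two_pow_max b c, two_pow_max a (max b c)] at h4
  have hp : (0:ℝ) < 2 ^ (max a (max b c)) := by positivity
  have hlt : (2:ℝ) ^ k4 < 2 ^ (max a (max b c) + 2) := by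
    calc (2:ℝ) ^ k4 ≤ 3 * 2 ^ (max a (max b c)) := h4
      _ < 4 * 2 ^ (max a (max b c)) := by nlinarith
      _ = 2 ^ (max a (max b c) + 2) := by rw [pow_add]; ring
  have := (pow_lt_pow_iff_right₀ (one_lt_two : (1:ℝ) < 2)).1 hlt
  omega

private lemma case_bound (s δ : ℝ) (hδ : 0 < δ) (hs : δ < s) (k4 M m E u v : ℕ)
    (hk4 : k4 ≤ M + 1) (hEm : E + m = u + v) :
    phi ((k4:ℝ) * s + (E:ℝ) * δ - ((M:ℝ) + (m:ℝ) + (E:ℝ)) * s)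
      ≤ phi s * phi (-s) ^ (M - (k4 - 1)) * (phi (-(s - δ)) ^ u * phi (-(s - δ)) ^ v) := by
  rw [phi_pow, phi_pow, phi_pow, ← phi_add, ← phi_add, ← phi_add]
  apply phi_mono
  have hs0 : 0 < s := hδ.trans hs
  have ht : (k4:ℝ) - 1 ≤ ((k4 - 1 : ℕ) : ℝ) := by
    have h0 : k4 ≤ (k4 - 1) + 1 := by omega
    have h1 : (k4:ℝ) ≤ ((k4 - 1 : ℕ) : ℝ) + 1 := by exact_mod_cast h0
    linarith
  have hMt : ((M - (k4 - 1) : ℕ) : ℝ) = (M:ℝ) - ((k4 - 1 : ℕ) : ℝ) := by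
    rw [Nat.cast_sub (by omega)]
  have hc : (E:ℝ) + (m:ℝ) = (u:ℝ) + (v:ℝ) := by exact_mod_cast hEm
  have p1 : ((k4:ℝ) - 1 - ((k4 - 1 : ℕ) : ℝ)) * s ≤ 0 :=
    mul_nonpos_of_nonpos_of_nonneg (by linarith) hs0.le
  have p2 : 0 ≤ (m:ℝ) * δ := mul_nonneg (Nat.cast_nonneg m) hδ.le
  have p3 : ((E:ℝ) + (m:ℝ)) * (s - δ) = ((u:ℝ) + (v:ℝ)) * (s - δ) := by rw [hc]
  rw [hMt]
  nlinarith [p1, p2, p3]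

private lemma case_bound4 (s δ : ℝ) (hδ : 0 < δ) (hs : δ < s) (k4 M m E : ℕ)
    (hk4 : k4 ≤ M + 1) :
    phi ((k4:ℝ) * s + (E:ℝ) * δ - ((M:ℝ) + (m:ℝ) + (E:ℝ)) * s)
      ≤ phi s * phi (-s) ^ (M + 1 - k4) := by
  rw [phi_pow, ← phi_add]
  apply phi_mono
  have hs0 : 0 < s := hδ.trans hs
  have h1 : ((M + 1 - k4 : ℕ) : ℝ) = (M:ℝ) + 1 - (k4:ℝ) := by
    rw [Nat.cast_sub (by omega)]; push_cast; ring
  rw [h1]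
  have p1 : 0 ≤ (E:ℝ) * (s - δ) := mul_nonneg (Nat.cast_nonneg E) (by linarith)
  have p2 : 0 ≤ (m:ℝ) * s := mul_nonneg (Nat.cast_nonneg m) hs0.le
  nlinarith [p1, p2]

open Classical in
private noncomputable def wgt (s δ : ℝ) (k4 : ℕ) (k : ℕ × ℕ × ℕ) : ℝ≥0∞ :=
  if dyCompat ((2:ℝ) ^ k.1) ((2:ℝ) ^ k.2.1) ((2:ℝ) ^ k.2.2) ((2:ℝ) ^ k4) then
    phi ((k4 : ℝ) * s
      + ((k.1 + k.2.1 + k.2.2 - max k.1 (max k.2.1 k.2.2)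
          - min k.1 (min k.2.1 k.2.2) : ℕ) : ℝ) * δ
      - ((k.1 : ℝ) + (k.2.1 : ℝ) + (k.2.2 : ℝ)) * s)
  else 0

private noncomputable def dd (s : ℝ) (c : Fin 3 → ℕ → ℝ≥0∞) (k : ℕ × ℕ × ℕ) : ℝ≥0∞ :=
  phi (((k.1 : ℝ) + (k.2.1 : ℝ) + (k.2.2 : ℝ)) * s) * (c 0 k.1 * c 1 k.2.1 * c 2 k.2.2)

private lemma ofReal_weight (s δ : ℝ) (d a b c : ℕ) :
    ENNReal.ofReal (((2:ℝ) ^ d) ^ s * med3 ((2:ℝ) ^ a) ((2:ℝ) ^ b) ((2:ℝ) ^ c) ^ δ)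
      = phi ((d : ℝ) * s + ((a + b + c - max a (max b c) - min a (min b c) : ℕ) : ℝ) * δ) := by
  rw [med3_two_pow, ENNReal.ofReal_mul (Real.rpow_nonneg (by positivity) _),
    ofReal_pow_rpow, ofReal_pow_rpow, ← phi_add]

private lemma T_eq (s δ : ℝ) (c : Fin 3 → ℕ → ℝ≥0∞) (k4 : ℕ) (k : ℕ × ℕ × ℕ) :
    (if dyCompat ((2:ℝ) ^ k.1) ((2:ℝ) ^ k.2.1) ((2:ℝ) ^ k.2.2) ((2:ℝ) ^ k4) then
        ENNReal.ofReal (((2:ℝ) ^ k4) ^ s *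
          med3 ((2:ℝ) ^ k.1) ((2:ℝ) ^ k.2.1) ((2:ℝ) ^ k.2.2) ^ δ) *
          c 0 k.1 * c 1 k.2.1 * c 2 k.2.2
      else 0) = wgt s δ k4 k * dd s c k := by
  unfold wgt dd
  by_cases hP : dyCompat ((2:ℝ) ^ k.1) ((2:ℝ) ^ k.2.1) ((2:ℝ) ^ k.2.2) ((2:ℝ) ^ k4)
  · rw [if_pos hP, if_pos hP, ofReal_weight s δ k4 k.1 k.2.1 k.2.2]
    have hXY : phi ((k4 : ℝ) * s
          + ((k.1 + k.2.1 + k.2.2 - max k.1 (max k.2.1 k.2.2)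
              - min k.1 (min k.2.1 k.2.2) : ℕ) : ℝ) * δ
          - ((k.1 : ℝ) + (k.2.1 : ℝ) + (k.2.2 : ℝ)) * s)
        * phi (((k.1 : ℝ) + (k.2.1 : ℝ) + (k.2.2 : ℝ)) * s)
        = phi ((k4 : ℝ) * s
          + ((k.1 + k.2.1 + k.2.2 - max k.1 (max k.2.1 k.2.2)
              - min k.1 (min k.2.1 k.2.2) : ℕ) : ℝ) * δ) := by
      rw [← phi_add]; congr 1; ring
    rw [← hXY]; ring
  · rw [if_neg hP, if_neg hP, zero_mul]

private lemma dd_sq (s : ℝ) (c : Fin 3 → ℕ → ℝ≥0∞) (k : ℕ × ℕ × ℕ) :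
    dd s c k ^ 2
      = (ENNReal.ofReal (((2:ℝ) ^ k.1) ^ (2 * s)) * c 0 k.1 ^ 2) *
        ((ENNReal.ofReal (((2:ℝ) ^ k.2.1) ^ (2 * s)) * c 1 k.2.1 ^ 2) *
         (ENNReal.ofReal (((2:ℝ) ^ k.2.2) ^ (2 * s)) * c 2 k.2.2 ^ 2)) := by
  unfold dd
  rw [ofReal_pow_rpow, ofReal_pow_rpow, ofReal_pow_rpow]
  have h2 : phi (((k.1:ℝ) + (k.2.1:ℝ) + (k.2.2:ℝ)) * s) ^ 2
      = phi ((k.1:ℝ) * (2 * s)) * (phi ((k.2.1:ℝ) * (2 * s)) * phi ((k.2.2:ℝ) * (2 * s))) := by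
    rw [sq, ← phi_add,
      show (((k.1:ℝ) + (k.2.1:ℝ) + (k.2.2:ℝ)) * s) + (((k.1:ℝ) + (k.2.1:ℝ) + (k.2.2:ℝ)) * s)
        = (k.1:ℝ) * (2 * s) + ((k.2.1:ℝ) * (2 * s) + (k.2.2:ℝ) * (2 * s)) by ring,
      phi_add, phi_add]
  rw [mul_pow, h2]; ring

private lemma wgt_sum_k4 (s δ : ℝ) (hδ : 0 < δ) (hs : δ < s) (k : ℕ × ℕ × ℕ) :
    ∑' k4 : ℕ, wgt s δ k4 k ≤ phi s * (1 - phi (-s))⁻¹ := by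
  obtain ⟨a, b, c⟩ := k
  apply tsum_reflect_le (phi s) (phi (-s)) (max a (max b c) + 1)
  intro k4
  by_cases hP : dyCompat ((2:ℝ) ^ a) ((2:ℝ) ^ b) ((2:ℝ) ^ c) ((2:ℝ) ^ k4)
  · have hM4 := compat_le a b c k4 hP
    unfold wgt
    dsimp only
    rw [if_pos hP, if_pos (show k4 ≤ max a (max b c) + 1 by omega)]
    have harg : ((a:ℝ) + (b:ℝ) + (c:ℝ))
        = ((max a (max b c) : ℕ) : ℝ) + ((min a (min b c) : ℕ) : ℝ)
          + ((a + b + c - max a (max b c) - min a (min b c) : ℕ) : ℝ) := by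
      calc ((a:ℝ) + (b:ℝ) + (c:ℝ)) = ((a + b + c : ℕ) : ℝ) := by push_cast; ring
        _ = ((max a (max b c) + min a (min b c)
              + (a + b + c - max a (max b c) - min a (min b c)) : ℕ) : ℝ) := by
          rw [show max a (max b c) + min a (min b c)
              + (a + b + c - max a (max b c) - min a (min b c)) = a + b + c by omega]
        _ = _ := by rw [Nat.cast_add, Nat.cast_add]
    rw [harg]
    exact case_bound4 s δ hδ hs k4 (max a (max b c)) (min a (min b c)) _ hM4
  · unfold wgt
    dsimp only
    rw [if_neg hP]
    exact zero_le

private lemma wgt_sum_k (s δ : ℝ) (hδ : 0 < δ) (hs : δ < s) (k4 : ℕ) :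
    ∑' k : ℕ × ℕ × ℕ, wgt s δ k4 k
      ≤ 3 * (phi s * (1 - phi (-s))⁻¹
          * ((1 - phi (-(s - δ)))⁻¹ * (1 - phi (-(s - δ)))⁻¹)) := by
  have hbound : ∀ k : ℕ × ℕ × ℕ, wgt s δ k4 k ≤
      (if k4 - 1 ≤ k.1 then phi s * phi (-s) ^ (k.1 - (k4 - 1)) else 0)
          * (phi (-(s - δ)) ^ k.2.1 * phi (-(s - δ)) ^ k.2.2)
      + (phi (-(s - δ)) ^ k.1
          * ((if k4 - 1 ≤ k.2.1 then phi s * phi (-s) ^ (k.2.1 - (k4 - 1)) else 0)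
              * phi (-(s - δ)) ^ k.2.2)
        + phi (-(s - δ)) ^ k.1
          * (phi (-(s - δ)) ^ k.2.1
              * (if k4 - 1 ≤ k.2.2 then phi s * phi (-s) ^ (k.2.2 - (k4 - 1)) else 0))) := by
    rintro ⟨a, b, c⟩
    by_cases hP : dyCompat ((2:ℝ) ^ a) ((2:ℝ) ^ b) ((2:ℝ) ^ c) ((2:ℝ) ^ k4)
    · have hM4 := compat_le a b c k4 hP
      unfold wgt
      dsimp only
      rw [if_pos hP]
      have harg : ((a:ℝ) + (b:ℝ) + (c:ℝ))
          = ((max a (max b c) : ℕ) : ℝ) + ((min a (min b c) : ℕ) : ℝ)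
            + ((a + b + c - max a (max b c) - min a (min b c) : ℕ) : ℝ) := by
        calc ((a:ℝ) + (b:ℝ) + (c:ℝ)) = ((a + b + c : ℕ) : ℝ) := by push_cast; ring
          _ = ((max a (max b c) + min a (min b c)
              + (a + b + c - max a (max b c) - min a (min b c)) : ℕ) : ℝ) := by
            rw [show max a (max b c) + min a (min b c)
              + (a + b + c - max a (max b c) - min a (min b c)) = a + b + c by omega]
          _ = _ := by rw [Nat.cast_add, Nat.cast_add]
      rw [harg]
      have hcase : max a (max b c) = a ∨ max a (max b c) = b ∨ max a (max b c) = c := by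
        omega
      rcases hcase with hM | hM | hM
      · refine le_trans ?_ le_self_add
        rw [hM, if_pos (show k4 - 1 ≤ a by omega)]
        exact case_bound s δ hδ hs k4 a (min a (min b c)) _ b c (by omega) (by omega)
      · refine le_trans ?_ (le_trans le_self_add le_add_self)
        rw [hM, if_pos (show k4 - 1 ≤ b by omega)]
        calc phi _
            ≤ phi s * phi (-s) ^ (b - (k4 - 1))
                * (phi (-(s - δ)) ^ a * phi (-(s - δ)) ^ c) :=
              case_bound s δ hδ hs k4 b (min a (min b c)) _ a c (by omega) (by omega)
          _ = phi (-(s - δ)) ^ a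
                * (phi s * phi (-s) ^ (b - (k4 - 1)) * phi (-(s - δ)) ^ c) := by ring
      · refine le_trans ?_ (le_trans le_add_self le_add_self)
        rw [hM, if_pos (show k4 - 1 ≤ c by omega)]
        calc phi _
            ≤ phi s * phi (-s) ^ (c - (k4 - 1))
                * (phi (-(s - δ)) ^ a * phi (-(s - δ)) ^ b) :=
              case_bound s δ hδ hs k4 c (min a (min b c)) _ a b (by omega) (by omega)
          _ = phi (-(s - δ)) ^ a
                * (phi (-(s - δ)) ^ b * (phi s * phi (-s) ^ (c - (k4 - 1)))) := by ring
    · unfold wgt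
      dsimp only
      rw [if_neg hP]
      exact zero_le
  have e1 : ∑' k : ℕ × ℕ × ℕ,
      (if k4 - 1 ≤ k.1 then phi s * phi (-s) ^ (k.1 - (k4 - 1)) else 0)
        * (phi (-(s - δ)) ^ k.2.1 * phi (-(s - δ)) ^ k.2.2)
      ≤ phi s * (1 - phi (-s))⁻¹
          * ((1 - phi (-(s - δ)))⁻¹ * (1 - phi (-(s - δ)))⁻¹) := by
    rw [tsum_triple (fun n => if k4 - 1 ≤ n then phi s * phi (-s) ^ (n - (k4 - 1)) else 0)
      (fun n => phi (-(s - δ)) ^ n) (fun n => phi (-(s - δ)) ^ n)]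
    gcongr
    · exact tsum_tail_le (phi s) (phi (-s)) (k4 - 1) _ (fun n => le_rfl)
    · exact (ENNReal.tsum_geometric _).le
    · exact (ENNReal.tsum_geometric _).le
  have e2 : ∑' k : ℕ × ℕ × ℕ,
      phi (-(s - δ)) ^ k.1
        * ((if k4 - 1 ≤ k.2.1 then phi s * phi (-s) ^ (k.2.1 - (k4 - 1)) else 0)
            * phi (-(s - δ)) ^ k.2.2)
      ≤ (1 - phi (-(s - δ)))⁻¹
          * (phi s * (1 - phi (-s))⁻¹ * (1 - phi (-(s - δ)))⁻¹) := by
    rw [tsum_triple (fun n => phi (-(s - δ)) ^ n)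
      (fun n => if k4 - 1 ≤ n then phi s * phi (-s) ^ (n - (k4 - 1)) else 0)
      (fun n => phi (-(s - δ)) ^ n)]
    gcongr
    · exact (ENNReal.tsum_geometric _).le
    · exact tsum_tail_le (phi s) (phi (-s)) (k4 - 1) _ (fun n => le_rfl)
    · exact (ENNReal.tsum_geometric _).le
  have e3 : ∑' k : ℕ × ℕ × ℕ,
      phi (-(s - δ)) ^ k.1
        * (phi (-(s - δ)) ^ k.2.1
            * (if k4 - 1 ≤ k.2.2 then phi s * phi (-s) ^ (k.2.2 - (k4 - 1)) else 0))
      ≤ (1 - phi (-(s - δ)))⁻¹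
          * ((1 - phi (-(s - δ)))⁻¹ * (phi s * (1 - phi (-s))⁻¹)) := by
    rw [tsum_triple (fun n => phi (-(s - δ)) ^ n) (fun n => phi (-(s - δ)) ^ n)
      (fun n => if k4 - 1 ≤ n then phi s * phi (-s) ^ (n - (k4 - 1)) else 0)]
    gcongr
    · exact (ENNReal.tsum_geometric _).le
    · exact (ENNReal.tsum_geometric _).le
    · exact tsum_tail_le (phi s) (phi (-s)) (k4 - 1) _ (fun n => le_rfl)
  calc ∑' k : ℕ × ℕ × ℕ, wgt s δ k4 k ≤ _ := ENNReal.tsum_le_tsum hbound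
    _ = _ + (_ + _) := by rw [ENNReal.tsum_add, ENNReal.tsum_add]
    _ ≤ phi s * (1 - phi (-s))⁻¹ * ((1 - phi (-(s - δ)))⁻¹ * (1 - phi (-(s - δ)))⁻¹)
        + ((1 - phi (-(s - δ)))⁻¹ * (phi s * (1 - phi (-s))⁻¹ * (1 - phi (-(s - δ)))⁻¹)
          + (1 - phi (-(s - δ)))⁻¹ * ((1 - phi (-(s - δ)))⁻¹ * (phi s * (1 - phi (-s))⁻¹))) :=
      add_le_add e1 (add_le_add e2 e3)
    _ = 3 * (phi s * (1 - phi (-s))⁻¹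
          * ((1 - phi (-(s - δ)))⁻¹ * (1 - phi (-(s - δ)))⁻¹)) := by ring

/-- the dyadic summation lemma (Lemma `lemma-summing`). -/
theorem dyadic_summation (s δ : ℝ) (hδ : 0 < δ) (hs : δ < s) :
    ∃ C : ℝ, 0 < C ∧ ∀ c : Fin 3 → ℕ → ℝ≥0∞,
      ∑' k₄ : ℕ,
        (∑' k : ℕ × ℕ × ℕ,
          (if dyCompat ((2:ℝ) ^ k.1) ((2:ℝ) ^ k.2.1) ((2:ℝ) ^ k.2.2) ((2:ℝ) ^ k₄) then
            ENNReal.ofReal (((2:ℝ) ^ k₄) ^ s *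
              med3 ((2:ℝ) ^ k.1) ((2:ℝ) ^ k.2.1) ((2:ℝ) ^ k.2.2) ^ δ) *
              c 0 k.1 * c 1 k.2.1 * c 2 k.2.2
          else 0)) ^ 2 ≤
      ENNReal.ofReal C *
        ∏ j : Fin 3, ∑' k : ℕ, ENNReal.ofReal (((2:ℝ) ^ k) ^ (2 * s)) * c j k ^ 2 := by
  classical
  have hs0 : 0 < s := hδ.trans hs
  set P1 : ℝ≥0∞ := phi s * (1 - phi (-s))⁻¹ with hP1
  set Q2 : ℝ≥0∞ := (1 - phi (-(s - δ)))⁻¹ with hQ2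
  set K : ℝ≥0∞ := 2 * (3 * (P1 * (Q2 * Q2))) * P1 with hK
  have hP1top : P1 ≠ ⊤ := by
    apply ENNReal.mul_ne_top (phi_ne_top _)
    rw [Ne, ENNReal.inv_eq_top]
    exact (tsub_pos_of_lt (phi_lt_one (by linarith : -s < 0))).ne'
  have hQ2top : Q2 ≠ ⊤ := by
    rw [hQ2, Ne, ENNReal.inv_eq_top]
    exact (tsub_pos_of_lt (phi_lt_one (by linarith : -(s - δ) < 0))).ne'
  have hKtop : K ≠ ⊤ := by
    rw [hK]
    exact ENNReal.mul_ne_top (ENNReal.mul_ne_top (by simp)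
      (ENNReal.mul_ne_top (by simp)
        (ENNReal.mul_ne_top hP1top (ENNReal.mul_ne_top hQ2top hQ2top)))) hP1top
  have hKle : K ≤ ENNReal.ofReal (K.toReal + 1) := by
    conv_lhs => rw [← ENNReal.ofReal_toReal hKtop]
    exact ENNReal.ofReal_le_ofReal (by linarith)
  refine ⟨K.toReal + 1, by linarith [(ENNReal.toReal_nonneg : 0 ≤ K.toReal)], fun c => ?_⟩
  refine le_trans (le_of_eq (tsum_congr fun k4 =>
    congrArg (· ^ 2) (tsum_congr fun k => T_eq s δ c k4 k))) ?_
  calc ∑' k4 : ℕ, (∑' k : ℕ × ℕ × ℕ, wgt s δ k4 k * dd s c k) ^ 2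
      ≤ ∑' k4 : ℕ, 2 * ((∑' k' : ℕ × ℕ × ℕ, wgt s δ k4 k')
          * ∑' k : ℕ × ℕ × ℕ, wgt s δ k4 k * dd s c k ^ 2) := by
        apply ENNReal.tsum_le_tsum
        intro k4
        rw [sq_tsum (wgt s δ k4) (dd s c), ← double_sum_eq (wgt s δ k4) (dd s c)]
        apply ENNReal.tsum_le_tsum
        intro k
        apply ENNReal.tsum_le_tsum
        intro k'
        calc (wgt s δ k4 k * dd s c k) * (wgt s δ k4 k' * dd s c k')
            = (wgt s δ k4 k * wgt s δ k4 k') * (dd s c k * dd s c k') := by ring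
          _ ≤ (wgt s δ k4 k * wgt s δ k4 k') * (dd s c k ^ 2 + dd s c k' ^ 2) :=
            mul_le_mul_right (mul_le_sq_add_sq _ _) _
    _ ≤ ∑' k4 : ℕ, 2 * ((3 * (P1 * (Q2 * Q2)))
          * ∑' k : ℕ × ℕ × ℕ, wgt s δ k4 k * dd s c k ^ 2) := by
        apply ENNReal.tsum_le_tsum
        intro k4
        exact mul_le_mul_right (mul_le_mul_left (wgt_sum_k s δ hδ hs k4) _) _
    _ = 2 * (3 * (P1 * (Q2 * Q2)))
          * ∑' k4 : ℕ, ∑' k : ℕ × ℕ × ℕ, wgt s δ k4 k * dd s c k ^ 2 := by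
        rw [← ENNReal.tsum_mul_left]
        exact tsum_congr fun k4 => by ring
    _ = 2 * (3 * (P1 * (Q2 * Q2)))
          * ∑' k : ℕ × ℕ × ℕ, (∑' k4 : ℕ, wgt s δ k4 k) * dd s c k ^ 2 := by
        congr 1
        rw [ENNReal.tsum_comm]
        exact tsum_congr fun k => ENNReal.tsum_mul_right
    _ ≤ 2 * (3 * (P1 * (Q2 * Q2))) * ∑' k : ℕ × ℕ × ℕ, P1 * dd s c k ^ 2 := by
        apply mul_le_mul_right
        exact ENNReal.tsum_le_tsum fun k => mul_le_mul_left (wgt_sum_k4 s δ hδ hs k) _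
    _ = K * ∑' k : ℕ × ℕ × ℕ, dd s c k ^ 2 := by
        rw [ENNReal.tsum_mul_left, hK]; ring
    _ = K * ((∑' n : ℕ, ENNReal.ofReal (((2:ℝ) ^ n) ^ (2 * s)) * c 0 n ^ 2)
          * ((∑' n : ℕ, ENNReal.ofReal (((2:ℝ) ^ n) ^ (2 * s)) * c 1 n ^ 2)
            * (∑' n : ℕ, ENNReal.ofReal (((2:ℝ) ^ n) ^ (2 * s)) * c 2 n ^ 2))) := by
        congr 1
        rw [tsum_congr fun k => dd_sq s c k]
        exact tsum_triple (fun n => ENNReal.ofReal (((2:ℝ) ^ n) ^ (2 * s)) * c 0 n ^ 2)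
          (fun n => ENNReal.ofReal (((2:ℝ) ^ n) ^ (2 * s)) * c 1 n ^ 2)
          (fun n => ENNReal.ofReal (((2:ℝ) ^ n) ^ (2 * s)) * c 2 n ^ 2)
    _ ≤ ENNReal.ofReal (K.toReal + 1)
          * ((∑' n : ℕ, ENNReal.ofReal (((2:ℝ) ^ n) ^ (2 * s)) * c 0 n ^ 2)
          * ((∑' n : ℕ, ENNReal.ofReal (((2:ℝ) ^ n) ^ (2 * s)) * c 1 n ^ 2)
            * (∑' n : ℕ, ENNReal.ofReal (((2:ℝ) ^ n) ^ (2 * s)) * c 2 n ^ 2))) :=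
        mul_le_mul_left hKle _
    _ = ENNReal.ofReal (K.toReal + 1)
          * ∏ j : Fin 3, ∑' k : ℕ, ENNReal.ofReal (((2:ℝ) ^ k) ^ (2 * s)) * c j k ^ 2 := by
        rw [Fin.prod_univ_three]; ring


end Dirac3D
end
end

section
/- There is an absolute constant C such that for all m ≥ 0, all a ∈ [0, 1/2], all j ∈ {1, 2, 3}, and all η, ζ ∈ ℝ³ (with η, ζ ≠ 0 if m = 0), the null symbols satisfy the operator-norm bounds: ‖q_j^+(η,ζ)‖ ≤ C [ |η−ζ| ( |η−ζ| − ||η|−|ζ|| ) / (⟨η⟩_m ⟨ζ⟩_m) ]^a and ‖q_j^−(η,ζ)‖ ≤ C [ (|η|+|ζ|) ( |η| + |ζ| − |η−ζ| ) / (⟨η⟩_m ⟨ζ⟩_m) ]^a. -/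
noncomputable section

open MeasureTheory Real Complex Matrix Function Set Filter
open scoped FourierTransform RealInnerProductSpace BigOperators ENNReal Topology

namespace Dirac3D


section QSymbAux

/-! ### Auxiliary lemmas for the null symbol bounds -/

lemma fse0 : (finSumFinEquiv.symm (0 : Fin 4) : Fin 2 ⊕ Fin 2) = Sum.inl 0 := rfl
lemma fse1 : (finSumFinEquiv.symm (1 : Fin 4) : Fin 2 ⊕ Fin 2) = Sum.inl 1 := rfl
lemma fse2 : (finSumFinEquiv.symm (2 : Fin 4) : Fin 2 ⊕ Fin 2) = Sum.inr 0 := rfl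
lemma fse3 : (finSumFinEquiv.symm (3 : Fin 4) : Fin 2 ⊕ Fin 2) = Sum.inr 1 := rfl

lemma alphaM0 : alphaM 0 = !![0,0,0,1;0,0,1,0;0,1,0,0;1,0,0,0] := by
  ext i j
  fin_cases i <;> fin_cases j <;>
    simp [alphaM, gamma0, gammaSp, blk, pauli, Matrix.mul_apply, Fin.sum_univ_four,
      Matrix.reindex_apply, Matrix.submatrix_apply, fse0, fse1, fse2, fse3,
      Matrix.fromBlocks_apply₁₁, Matrix.fromBlocks_apply₁₂, Matrix.fromBlocks_apply₂₁,
      Matrix.fromBlocks_apply₂₂, Matrix.one_apply, Matrix.vecHead, Matrix.vecTail]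

lemma alphaM1 :
    alphaM 1 = !![0,0,0,-Complex.I;0,0,Complex.I,0;0,-Complex.I,0,0;Complex.I,0,0,0] := by
  ext i j
  fin_cases i <;> fin_cases j <;>
    simp [alphaM, gamma0, gammaSp, blk, pauli, Matrix.mul_apply, Fin.sum_univ_four,
      Matrix.reindex_apply, Matrix.submatrix_apply, fse0, fse1, fse2, fse3,
      Matrix.fromBlocks_apply₁₁, Matrix.fromBlocks_apply₁₂, Matrix.fromBlocks_apply₂₁,
      Matrix.fromBlocks_apply₂₂, Matrix.one_apply, Matrix.vecHead, Matrix.vecTail]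

lemma alphaM2 : alphaM 2 = !![0,0,1,0;0,0,0,-1;1,0,0,0;0,-1,0,0] := by
  ext i j
  fin_cases i <;> fin_cases j <;>
    simp [alphaM, gamma0, gammaSp, blk, pauli, Matrix.mul_apply, Fin.sum_univ_four,
      Matrix.reindex_apply, Matrix.submatrix_apply, fse0, fse1, fse2, fse3,
      Matrix.fromBlocks_apply₁₁, Matrix.fromBlocks_apply₁₂, Matrix.fromBlocks_apply₂₁,
      Matrix.fromBlocks_apply₂₂, Matrix.one_apply, Matrix.vecHead, Matrix.vecTail]

lemma spinM0 : spinM 0 = !![0,1,0,0;1,0,0,0;0,0,0,1;0,0,1,0] := by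
  ext i j
  fin_cases i <;> fin_cases j <;>
    simp [spinM, blk, pauli, Matrix.reindex_apply, Matrix.submatrix_apply, fse0, fse1, fse2,
      fse3, Matrix.fromBlocks_apply₁₁, Matrix.fromBlocks_apply₁₂, Matrix.fromBlocks_apply₂₁,
      Matrix.fromBlocks_apply₂₂, Matrix.vecHead, Matrix.vecTail]

lemma spinM1 :
    spinM 1 = !![0,-Complex.I,0,0;Complex.I,0,0,0;0,0,0,-Complex.I;0,0,Complex.I,0] := by
  ext i j
  fin_cases i <;> fin_cases j <;>
    simp [spinM, blk, pauli, Matrix.reindex_apply, Matrix.submatrix_apply, fse0, fse1, fse2,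
      fse3, Matrix.fromBlocks_apply₁₁, Matrix.fromBlocks_apply₁₂, Matrix.fromBlocks_apply₂₁,
      Matrix.fromBlocks_apply₂₂, Matrix.vecHead, Matrix.vecTail]

lemma spinM2 : spinM 2 = !![1,0,0,0;0,-1,0,0;0,0,1,0;0,0,0,-1] := by
  ext i j
  fin_cases i <;> fin_cases j <;>
    simp [spinM, blk, pauli, Matrix.reindex_apply, Matrix.submatrix_apply, fse0, fse1, fse2,
      fse3, Matrix.fromBlocks_apply₁₁, Matrix.fromBlocks_apply₁₂, Matrix.fromBlocks_apply₂₁,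
      Matrix.fromBlocks_apply₂₂, Matrix.vecHead, Matrix.vecTail]

lemma matNorm_smul (c : ℂ) (M : Matrix (Fin 4) (Fin 4) ℂ) :
    matNorm (c • M) = ‖c‖ * matNorm M := by
  unfold matNorm
  rw [_root_.map_smul, _root_.map_smul]
  rw [norm_smul c (LinearMap.toContinuousLinearMap (Matrix.toEuclideanLin M))]

lemma matNorm_neg (M : Matrix (Fin 4) (Fin 4) ℂ) : matNorm (-M) = matNorm M := by
  have h : -M = (-1 : ℂ) • M := by simp
  rw [h, matNorm_smul]; simp

lemma norm_C4_sq (v : C4) : ‖v‖ ^ 2 = ∑ i, ‖v i‖ ^ 2 := by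
  rw [EuclideanSpace.norm_eq, Real.sq_sqrt (by positivity)]

lemma coord_le_norm (v : C4) (i : Fin 4) : ‖v i‖ ≤ ‖v‖ := by
  have h1 : ‖v i‖ ^ 2 ≤ ‖v‖ ^ 2 := by
    rw [norm_C4_sq]
    exact Finset.single_le_sum (f := fun i => ‖v i‖ ^ 2)
      (fun _ _ => by positivity) (Finset.mem_univ i)
  nlinarith [norm_nonneg (v i), norm_nonneg v]

lemma matNorm_le (M : Matrix (Fin 4) (Fin 4) ℂ) (b : ℝ)
    (h : ∀ i j, ‖M i j‖ ≤ b) : matNorm M ≤ 16 * b := by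
  have hb : 0 ≤ b := le_trans (norm_nonneg _) (h 0 0)
  apply ContinuousLinearMap.opNorm_le_bound _ (by positivity)
  intro v
  simp only [LinearMap.coe_toContinuousLinearMap']
  rw [Matrix.toEuclideanLin_apply]
  set w : C4 := WithLp.toLp 2 (M *ᵥ v.ofLp)
  have hw : ∀ i, ‖w i‖ ≤ 4 * (b * ‖v‖) := by
    intro i
    show ‖∑ j, M i j * v j‖ ≤ _
    refine le_trans (norm_sum_le _ _) ?_
    have hj : ∀ j : Fin 4, ‖M i j * v j‖ ≤ b * ‖v‖ := by
      intro j
      rw [norm_mul]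
      exact mul_le_mul (h i j) (coord_le_norm v j) (norm_nonneg _) hb
    calc ∑ j, ‖M i j * v j‖ ≤ ∑ _j : Fin 4, b * ‖v‖ :=
          Finset.sum_le_sum (fun j _ => hj j)
      _ = 4 * (b * ‖v‖) := by simp
  have h2 : ‖w‖ ^ 2 ≤ (16 * b * ‖v‖) ^ 2 := by
    rw [norm_C4_sq]
    have hj : ∀ i : Fin 4, ‖w i‖ ^ 2 ≤ (4 * (b * ‖v‖)) ^ 2 := fun i =>
      pow_le_pow_left₀ (norm_nonneg _) (hw i) 2
    calc ∑ i, ‖w i‖ ^ 2 ≤ ∑ _i : Fin 4, (4 * (b * ‖v‖)) ^ 2 :=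
          Finset.sum_le_sum (fun i _ => hj i)
      _ ≤ (16 * b * ‖v‖) ^ 2 := by simp; nlinarith [norm_nonneg v, hb]
  nlinarith [norm_nonneg w, norm_nonneg v, hb, mul_nonneg hb (norm_nonneg v)]

lemma norm_Rd_sq (v : Rd) : ‖v‖ ^ 2 = ∑ i, v i ^ 2 := by
  rw [EuclideanSpace.norm_eq, Real.sq_sqrt (by positivity)]
  simp [sq_abs]

lemma inner_Rd (x y : Rd) : ⟪x, y⟫ = ∑ i, x i * y i := by
  simp [PiLp.inner_apply, RCLike.inner_apply, conj_trivial, mul_comm]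

lemma sumAlpha (c : Fin 3 → ℝ) : (∑ i, ((c i : ℝ) : ℂ) • alphaM i) =
    !![0, 0, (c 2 : ℂ), (c 0 : ℂ) - Complex.I * (c 1 : ℂ);
       0, 0, (c 0 : ℂ) + Complex.I * (c 1 : ℂ), -(c 2 : ℂ);
       (c 2 : ℂ), (c 0 : ℂ) - Complex.I * (c 1 : ℂ), 0, 0;
       (c 0 : ℂ) + Complex.I * (c 1 : ℂ), -(c 2 : ℂ), 0, 0] := by
  rw [Fin.sum_univ_three, alphaM0, alphaM1, alphaM2]
  ext i j
  fin_cases i <;> fin_cases j <;> simp [Matrix.smul_apply, Matrix.vecHead, Matrix.vecTail] <;> ring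

lemma sumSpin (w : Fin 3 → ℝ) : (∑ l, ((w l : ℝ) : ℂ) • spinM l) =
    !![(w 2 : ℂ), (w 0 : ℂ) - Complex.I * (w 1 : ℂ), 0, 0;
       (w 0 : ℂ) + Complex.I * (w 1 : ℂ), -(w 2 : ℂ), 0, 0;
       0, 0, (w 2 : ℂ), (w 0 : ℂ) - Complex.I * (w 1 : ℂ);
       0, 0, (w 0 : ℂ) + Complex.I * (w 1 : ℂ), -(w 2 : ℂ)] := by
  rw [Fin.sum_univ_three, spinM0, spinM1, spinM2]
  ext i j
  fin_cases i <;> fin_cases j <;> simp [Matrix.smul_apply, Matrix.vecHead, Matrix.vecTail] <;> ring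

lemma abs_sub_I_mul (x y b : ℝ) (hx : |x| ≤ b) (hy : |y| ≤ b) :
    ‖(x : ℂ) - Complex.I * (y : ℂ)‖ ≤ 2 * b := by
  calc ‖(x : ℂ) - Complex.I * (y : ℂ)‖ ≤ ‖(x : ℂ)‖ + ‖Complex.I * (y : ℂ)‖ := norm_sub_le _ _
    _ = |x| + |y| := by simp
    _ ≤ 2 * b := by linarith

lemma abs_add_I_mul (x y b : ℝ) (hx : |x| ≤ b) (hy : |y| ≤ b) :
    ‖(x : ℂ) + Complex.I * (y : ℂ)‖ ≤ 2 * b := by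
  calc ‖(x : ℂ) + Complex.I * (y : ℂ)‖ ≤ ‖(x : ℂ)‖ + ‖Complex.I * (y : ℂ)‖ := norm_add_le _ _
    _ = |x| + |y| := by simp
    _ ≤ 2 * b := by linarith

lemma matNorm_sumAlpha_le (c : Fin 3 → ℝ) (b : ℝ) (h : ∀ i, |c i| ≤ b) :
    matNorm (∑ i, ((c i : ℝ) : ℂ) • alphaM i) ≤ 32 * b := by
  have hb : 0 ≤ b := le_trans (abs_nonneg _) (h 0)
  rw [sumAlpha]
  refine le_trans (matNorm_le _ (2 * b) ?_) (by linarith)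
  intro i j
  have hA : (0 : ℝ) ≤ 2 * b := by linarith
  have hB : ‖(c 2 : ℂ)‖ ≤ 2 * b := by
    rw [Complex.norm_real, Real.norm_eq_abs]; linarith [h 2]
  have hB' : ‖-(c 2 : ℂ)‖ ≤ 2 * b := by rw [norm_neg]; exact hB
  have hC := abs_sub_I_mul (c 0) (c 1) b (h 0) (h 1)
  have hD := abs_add_I_mul (c 0) (c 1) b (h 0) (h 1)
  fin_cases i <;> fin_cases j <;>
    first
      | simpa [Matrix.vecHead, Matrix.vecTail] using hA
      | simpa [Matrix.vecHead, Matrix.vecTail] using hB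
      | simpa [Matrix.vecHead, Matrix.vecTail] using hB'
      | simpa [Matrix.vecHead, Matrix.vecTail] using hC
      | simpa [Matrix.vecHead, Matrix.vecTail] using hD

lemma matNorm_sumSpin_le (w : Fin 3 → ℝ) (b : ℝ) (h : ∀ l, |w l| ≤ b) :
    matNorm (∑ l, ((w l : ℝ) : ℂ) • spinM l) ≤ 32 * b := by
  have hb : 0 ≤ b := le_trans (abs_nonneg _) (h 0)
  rw [sumSpin]
  refine le_trans (matNorm_le _ (2 * b) ?_) (by linarith)
  intro i j
  have hA : (0 : ℝ) ≤ 2 * b := by linarith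
  have hB : ‖(w 2 : ℂ)‖ ≤ 2 * b := by
    rw [Complex.norm_real, Real.norm_eq_abs]; linarith [h 2]
  have hB' : ‖-(w 2 : ℂ)‖ ≤ 2 * b := by rw [norm_neg]; exact hB
  have hC := abs_sub_I_mul (w 0) (w 1) b (h 0) (h 1)
  have hD := abs_add_I_mul (w 0) (w 1) b (h 0) (h 1)
  fin_cases i <;> fin_cases j <;>
    first
      | simpa [Matrix.vecHead, Matrix.vecTail] using hA
      | simpa [Matrix.vecHead, Matrix.vecTail] using hB
      | simpa [Matrix.vecHead, Matrix.vecTail] using hB'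
      | simpa [Matrix.vecHead, Matrix.vecTail] using hC
      | simpa [Matrix.vecHead, Matrix.vecTail] using hD

lemma norm_nhat_le_one (m : ℝ) (η : Rd) : ‖nhat m η‖ ≤ 1 := by
  have hjap : 0 ≤ jap m η := Real.sqrt_nonneg _
  have hle : ‖η‖ ≤ jap m η := by
    rw [jap, show m ^ 2 + ‖η‖ ^ 2 = ‖η‖ ^ 2 + m ^ 2 by ring]
    calc ‖η‖ = Real.sqrt (‖η‖ ^ 2) := by rw [Real.sqrt_sq (norm_nonneg _)]
      _ ≤ _ := Real.sqrt_le_sqrt (by nlinarith [sq_nonneg m])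
  rw [nhat, norm_smul, Real.norm_eq_abs, abs_inv, _root_.abs_of_nonneg hjap]
  rcases eq_or_lt_of_le hjap with h0 | h0
  · have : ‖η‖ = 0 := le_antisymm (h0 ▸ hle) (norm_nonneg _)
    simp [this]
  · rw [inv_mul_le_iff₀ h0]; simpa using hle

/-- Shared setup packaged as a proposition. -/
lemma qsetup (m : ℝ) (ε : Bool) (η ζ : Rd) :
    0 ≤ ‖nhat m η‖ ∧ ‖nhat m η‖ ≤ 1 ∧ 0 ≤ ‖nhat m ζ‖ ∧ ‖nhat m ζ‖ ≤ 1 ∧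
    |(⟪nhat m η, nhat m ζ⟫ : ℝ)| ≤ ‖nhat m η‖ * ‖nhat m ζ‖ ∧
    (sg ε = 1 ∨ sg ε = -1) :=
  ⟨norm_nonneg _, norm_nhat_le_one m η, norm_nonneg _, norm_nhat_le_one m ζ,
    abs_real_inner_le_norm _ _, by cases ε <;> simp [sg]⟩

lemma sqrt_lemma (D x : ℝ) (hD0 : 0 ≤ D) (hx : x ^ 2 ≤ 2 * D) :
    |x| ≤ (3 / 2) * Real.sqrt D := by
  rw [← Real.sqrt_sq_eq_abs]
  calc Real.sqrt (x ^ 2) ≤ Real.sqrt (2 * D) := Real.sqrt_le_sqrt hx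
    _ = Real.sqrt 2 * Real.sqrt D := Real.sqrt_mul (by norm_num) D
    _ ≤ (3 / 2) * Real.sqrt D := by
        have h32 : Real.sqrt 2 ≤ 3 / 2 := by
          rw [show (3 / 2 : ℝ) = Real.sqrt ((3 / 2) ^ 2) by rw [Real.sqrt_sq]; norm_num]
          exact Real.sqrt_le_sqrt (by norm_num)
        nlinarith [Real.sqrt_nonneg D]

lemma matNorm_qSymb_le0 (m : ℝ) (ε : Bool) (η ζ : Rd) :
    matNorm (qSymb m ε η ζ 0) ≤
      48 * Real.sqrt (‖nhat m η‖ * ‖nhat m ζ‖ - sg ε * ⟪nhat m η, nhat m ζ⟫) := by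
  simp only [qSymb, Matrix.cons_val_zero]
  obtain ⟨hP0, hP1, hQ0, hQ1, hCS, hspm⟩ := qsetup m ε η ζ
  generalize he : nhat m η = e at *
  generalize hz' : nhat m ζ = z at *
  generalize hP : ‖e‖ = P at *
  generalize hQ : ‖z‖ = Q at *
  generalize hI : (⟪e, z⟫ : ℝ) = Ipr at *
  generalize hsg : sg ε = s at *
  have h1 := abs_le.mp hCS
  have hD0 : 0 ≤ P * Q - s * Ipr := by
    rcases hspm with h | h <;> rw [h] <;> linarith [h1.1, h1.2]
  have hD2 : P * Q - s * Ipr ≤ 2 := by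
    have hPQ : P * Q ≤ 1 := by nlinarith
    rcases hspm with h | h <;> rw [h] <;> nlinarith [h1.1, h1.2]
  set D := P * Q - s * Ipr with hDdef
  have hsqrt0 : 0 ≤ Real.sqrt D := Real.sqrt_nonneg _
  have hsqD : Real.sqrt D ^ 2 = D := Real.sq_sqrt hD0
  have hmain : matNorm (((D : ℝ) : ℂ) • (1 : Matrix (Fin 4) (Fin 4) ℂ)) ≤ 16 * D := by
    apply matNorm_le
    intro i j
    rw [Matrix.smul_apply, Matrix.one_apply]
    by_cases hij : i = j
    · rw [hij]
      simp only [if_pos rfl, if_true, smul_eq_mul, mul_one, Complex.norm_real, Real.norm_eq_abs]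
      exact le_of_eq (_root_.abs_of_nonneg hD0)
    · simp [hij, hD0]
  refine hmain.trans ?_
  have hDle : D ≤ 2 * Real.sqrt D := by
    nlinarith [hsqD, hD2, hsqrt0, sq_nonneg (Real.sqrt D - 2)]
  linarith

lemma D_facts (P Q Ipr s : ℝ) (hP0 : 0 ≤ P) (hP1 : P ≤ 1) (hQ0 : 0 ≤ Q) (hQ1 : Q ≤ 1)
    (hCS : |Ipr| ≤ P * Q) (hspm : s = 1 ∨ s = -1) :
    0 ≤ P * Q - s * Ipr ∧ P * Q - s * Ipr ≤ 2 := by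
  have h1 := abs_le.mp hCS
  have hPQ : P * Q ≤ 1 := by nlinarith
  constructor
  · rcases hspm with h | h <;> rw [h] <;> linarith [h1.1, h1.2]
  · rcases hspm with h | h <;> rw [h] <;> nlinarith [h1.1, h1.2]

lemma sum_sq_coeff (e0 e1 e2 z0 z1 z2 P Q Ipr s : ℝ)
    (hPe : P ^ 2 = e0 ^ 2 + e1 ^ 2 + e2 ^ 2) (hQz : Q ^ 2 = z0 ^ 2 + z1 ^ 2 + z2 ^ 2)
    (hIe : Ipr = e0 * z0 + e1 * z1 + e2 * z2)
    (hP0 : 0 ≤ P) (hP1 : P ≤ 1) (hQ0 : 0 ≤ Q) (hQ1 : Q ≤ 1)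
    (hCS : |Ipr| ≤ P * Q) (hspm : s = 1 ∨ s = -1) :
    (e0 * Q - s * z0 * P) ^ 2 + (e1 * Q - s * z1 * P) ^ 2 + (e2 * Q - s * z2 * P) ^ 2 ≤
      2 * (P * Q - s * Ipr) := by
  have hs2 : s ^ 2 = 1 := by rcases hspm with h | h <;> rw [h] <;> norm_num
  have hkey : (e0 * Q - s * z0 * P) ^ 2 + (e1 * Q - s * z1 * P) ^ 2 +
      (e2 * Q - s * z2 * P) ^ 2 = 2 * P * Q * (P * Q - s * Ipr) := by
    linear_combination (-(Q ^ 2)) * hPe - s ^ 2 * P ^ 2 * hQz + 2 * s * P * Q * hIe +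
      P ^ 2 * Q ^ 2 * hs2
  rw [hkey]
  have hD0 := (D_facts P Q Ipr s hP0 hP1 hQ0 hQ1 hCS hspm).1
  have hPQ1 : P * Q ≤ 1 := by nlinarith
  nlinarith [mul_nonneg hD0 (by linarith : (0:ℝ) ≤ 1 - P * Q)]

lemma lagrange_bound (e0 e1 e2 z0 z1 z2 P Q Ipr s : ℝ)
    (hPe : P ^ 2 = e0 ^ 2 + e1 ^ 2 + e2 ^ 2) (hQz : Q ^ 2 = z0 ^ 2 + z1 ^ 2 + z2 ^ 2)
    (hIe : Ipr = e0 * z0 + e1 * z1 + e2 * z2)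
    (hP0 : 0 ≤ P) (hP1 : P ≤ 1) (hQ0 : 0 ≤ Q) (hQ1 : Q ≤ 1)
    (hCS : |Ipr| ≤ P * Q) (hspm : s = 1 ∨ s = -1) :
    (e1 * z2 - e2 * z1) ^ 2 + (e2 * z0 - e0 * z2) ^ 2 + (e0 * z1 - e1 * z0) ^ 2 ≤
      2 * (P * Q - s * Ipr) := by
  have hs2 : s ^ 2 = 1 := by rcases hspm with h | h <;> rw [h] <;> norm_num
  have hlag : (e1 * z2 - e2 * z1) ^ 2 + (e2 * z0 - e0 * z2) ^ 2 + (e0 * z1 - e1 * z0) ^ 2 =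
      P ^ 2 * Q ^ 2 - Ipr ^ 2 := by
    linear_combination (-(Q ^ 2)) * hPe - (e0 ^ 2 + e1 ^ 2 + e2 ^ 2) * hQz +
      (Ipr + (e0 * z0 + e1 * z1 + e2 * z2)) * hIe
  rw [hlag]
  obtain ⟨hD0, _⟩ := D_facts P Q Ipr s hP0 hP1 hQ0 hQ1 hCS hspm
  have h1 := abs_le.mp hCS
  have hfac : P ^ 2 * Q ^ 2 - Ipr ^ 2 = (P * Q - s * Ipr) * (P * Q + s * Ipr) := by
    linear_combination Ipr ^ 2 * hs2
  rw [hfac]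
  have h2 : P * Q + s * Ipr ≤ 2 := by
    have hPQ : P * Q ≤ 1 := by nlinarith
    rcases hspm with h | h <;> rw [h] <;> nlinarith [h1.1, h1.2]
  nlinarith [hD0, h2]

lemma comp_le3 (a b c T : ℝ) (h : a ^ 2 + b ^ 2 + c ^ 2 ≤ T) :
    a ^ 2 ≤ T ∧ b ^ 2 ≤ T ∧ c ^ 2 ≤ T := by
  refine ⟨?_, ?_, ?_⟩ <;> nlinarith [sq_nonneg a, sq_nonneg b, sq_nonneg c]

lemma matNorm_qSymb_le1 (m : ℝ) (ε : Bool) (η ζ : Rd) :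
    matNorm (qSymb m ε η ζ 1) ≤
      48 * Real.sqrt (‖nhat m η‖ * ‖nhat m ζ‖ - sg ε * ⟪nhat m η, nhat m ζ⟫) := by
  simp only [qSymb, Matrix.cons_val_one, Matrix.head_cons, Matrix.cons_val_zero]
  rw [matNorm_neg]
  obtain ⟨hP0, hP1, hQ0, hQ1, hCS, hspm⟩ := qsetup m ε η ζ
  have hPe := norm_Rd_sq (nhat m η)
  have hQz := norm_Rd_sq (nhat m ζ)
  have hIe := inner_Rd (nhat m η) (nhat m ζ)
  generalize he : nhat m η = e at *
  generalize hz' : nhat m ζ = z at *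
  generalize hP : ‖e‖ = P at *
  generalize hQ : ‖z‖ = Q at *
  generalize hI : (⟪e, z⟫ : ℝ) = Ipr at *
  generalize hsg : sg ε = s at *
  rw [Fin.sum_univ_three] at hPe hQz hIe
  have hD0 := (D_facts P Q Ipr s hP0 hP1 hQ0 hQ1 hCS hspm).1
  have hsum := sum_sq_coeff (e 0) (e 1) (e 2) (z 0) (z 1) (z 2) P Q Ipr s
    hPe hQz hIe hP0 hP1 hQ0 hQ1 hCS hspm
  obtain ⟨hc0, hc1, hc2⟩ := comp_le3 _ _ _ _ hsum
  have hc : ∀ i : Fin 3, |e i * Q - s * z i * P| ≤ (3 / 2) * Real.sqrt (P * Q - s * Ipr) := by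
    intro i
    apply sqrt_lemma _ _ hD0
    fin_cases i
    · exact hc0
    · exact hc1
    · exact hc2
  calc matNorm (∑ i, (((e i * Q - s * z i * P : ℝ)) : ℂ) • alphaM i) ≤
        32 * ((3 / 2) * Real.sqrt (P * Q - s * Ipr)) :=
      matNorm_sumAlpha_le (fun i => e i * Q - s * z i * P) _ hc
    _ = 48 * Real.sqrt (P * Q - s * Ipr) := by ring

lemma matNorm_qSymb_le2 (m : ℝ) (ε : Bool) (η ζ : Rd) :
    matNorm (qSymb m ε η ζ 2) ≤
      48 * Real.sqrt (‖nhat m η‖ * ‖nhat m ζ‖ - sg ε * ⟪nhat m η, nhat m ζ⟫) := by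
  simp only [qSymb, Matrix.cons_val_two, Matrix.tail_cons, Matrix.head_cons]
  rw [matNorm_smul]
  obtain ⟨hP0, hP1, hQ0, hQ1, hCS, hspm⟩ := qsetup m ε η ζ
  have hPe := norm_Rd_sq (nhat m η)
  have hQz := norm_Rd_sq (nhat m ζ)
  have hIe := inner_Rd (nhat m η) (nhat m ζ)
  generalize he : nhat m η = e at *
  generalize hz' : nhat m ζ = z at *
  generalize hP : ‖e‖ = P at *
  generalize hQ : ‖z‖ = Q at *
  generalize hI : (⟪e, z⟫ : ℝ) = Ipr at *
  generalize hsg : sg ε = s at *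
  rw [Fin.sum_univ_three] at hPe hQz hIe
  have hsabs : |s| = 1 := by rcases hspm with h | h <;> rw [h] <;> norm_num
  have habs : ‖(((-s : ℝ)) : ℂ) * Complex.I‖ = 1 := by
    rw [norm_mul, Complex.norm_real, Complex.norm_I, Real.norm_eq_abs, abs_neg, hsabs]; ring
  rw [habs, one_mul]
  have hD0 := (D_facts P Q Ipr s hP0 hP1 hQ0 hQ1 hCS hspm).1
  have hw0 : cross3 e z 0 = e 1 * z 2 - e 2 * z 1 := rfl
  have hw1 : cross3 e z 1 = e 2 * z 0 - e 0 * z 2 := rfl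
  have hw2 : cross3 e z 2 = e 0 * z 1 - e 1 * z 0 := rfl
  have hsum := lagrange_bound (e 0) (e 1) (e 2) (z 0) (z 1) (z 2) P Q Ipr s
    hPe hQz hIe hP0 hP1 hQ0 hQ1 hCS hspm
  obtain ⟨hc0, hc1, hc2⟩ := comp_le3 _ _ _ _ hsum
  have hc : ∀ l : Fin 3, |cross3 e z l| ≤ (3 / 2) * Real.sqrt (P * Q - s * Ipr) := by
    intro l
    apply sqrt_lemma _ _ hD0
    fin_cases l
    · simpa [cross3] using hc0
    · simpa [cross3] using hc1
    · simpa [cross3] using hc2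
  calc matNorm (∑ l, ((cross3 e z l : ℝ) : ℂ) • spinM l) ≤
        32 * ((3 / 2) * Real.sqrt (P * Q - s * Ipr)) := matNorm_sumSpin_le (cross3 e z) _ hc
    _ = 48 * Real.sqrt (P * Q - s * Ipr) := by ring

/-- Unconditional key bound: `‖q_j^ε(η,ζ)‖ ≤ 48 √(|η̂||ζ̂| ∓ η̂·ζ̂)`. -/
lemma matNorm_qSymb_le (m : ℝ) (ε : Bool) (η ζ : Rd) (j : Fin 3) :
    matNorm (qSymb m ε η ζ j) ≤
      48 * Real.sqrt (‖nhat m η‖ * ‖nhat m ζ‖ - sg ε * ⟪nhat m η, nhat m ζ⟫) := by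
  fin_cases j
  · exact matNorm_qSymb_le0 m ε η ζ
  · exact matNorm_qSymb_le1 m ε η ζ
  · exact matNorm_qSymb_le2 m ε η ζ

end QSymbAux

lemma rpow_combine (N D X a : ℝ) (hD0 : 0 ≤ D) (hD2 : D ≤ 2) (hDX : D ≤ X)
    (hN : N ≤ 48 * Real.sqrt D) (ha0 : 0 ≤ a) (ha1 : a ≤ 1 / 2) :
    N ≤ 100 * X ^ a := by
  have hX0 : 0 ≤ X := le_trans hD0 hDX
  rcases le_or_gt X 1 with hX1 | hX1
  · rcases eq_or_lt_of_le hX0 with h0 | h0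
    · have hD : D = 0 := le_antisymm (h0 ▸ hDX) hD0
      have hN0 : N ≤ 0 := by simpa [hD] using hN
      have : (0 : ℝ) ≤ 100 * X ^ a := by positivity
      linarith
    · have h1 : Real.sqrt D ≤ Real.sqrt X := Real.sqrt_le_sqrt hDX
      have h2 : Real.sqrt X = X ^ (1 / 2 : ℝ) := Real.sqrt_eq_rpow X
      have h3 : X ^ (1 / 2 : ℝ) ≤ X ^ a := Real.rpow_le_rpow_of_exponent_ge h0 hX1 ha1
      have h4 : (0 : ℝ) ≤ X ^ a := Real.rpow_nonneg hX0 a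
      calc N ≤ 48 * Real.sqrt D := hN
        _ ≤ 48 * (X ^ a) := by rw [← h2] at h3; nlinarith
        _ ≤ 100 * X ^ a := by nlinarith
  · have hs2 : Real.sqrt D ≤ 2 := by
      rw [show (2 : ℝ) = Real.sqrt 4 by
        rw [show (4 : ℝ) = 2 ^ 2 by norm_num, Real.sqrt_sq]; norm_num]
      exact Real.sqrt_le_sqrt (by linarith)
    have h2 : (1 : ℝ) ≤ X ^ a := by
      have := Real.rpow_le_rpow_of_exponent_le (le_of_lt hX1) ha0
      simpa [Real.rpow_zero] using this
    linarith

/-- pointwise operator-norm bounds on the null symbols q_j^±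
(Lemma `lm-qest`). -/
theorem null_symbol_bounds :
    ∃ C : ℝ, 0 < C ∧ ∀ (m : ℝ), 0 ≤ m → ∀ a : ℝ, a ∈ Set.Icc (0:ℝ) (1/2) →
      ∀ (j : Fin 3) (η ζ : Rd), (m = 0 → η ≠ 0 ∧ ζ ≠ 0) →
        matNorm (qSymb m true η ζ j) ≤
          C * ((‖η - ζ‖ * (‖η - ζ‖ - |‖η‖ - ‖ζ‖|)) / (jap m η * jap m ζ)) ^ a ∧
        matNorm (qSymb m false η ζ j) ≤
          C * (((‖η‖ + ‖ζ‖) * (‖η‖ + ‖ζ‖ - ‖η - ζ‖)) / (jap m η * jap m ζ)) ^ a := by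
  refine ⟨100, by norm_num, ?_⟩
  intro m hm a ha j η ζ hnz
  obtain ⟨ha0, ha1⟩ := ha
  have hJη : 0 < jap m η := by
    rw [jap]
    apply Real.sqrt_pos.mpr
    rcases eq_or_ne m 0 with h | h
    · have hη : (0 : ℝ) < ‖η‖ := norm_pos_iff.mpr (hnz h).1
      nlinarith [sq_nonneg m]
    · have hm2 : (0 : ℝ) < m ^ 2 := by positivity
      nlinarith [sq_nonneg ‖η‖]
  have hJζ : 0 < jap m ζ := by
    rw [jap]
    apply Real.sqrt_pos.mpr
    rcases eq_or_ne m 0 with h | h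
    · have hζ : (0 : ℝ) < ‖ζ‖ := norm_pos_iff.mpr (hnz h).2
      nlinarith [sq_nonneg m]
    · have hm2 : (0 : ℝ) < m ^ 2 := by positivity
      nlinarith [sq_nonneg ‖ζ‖]
  have hinner : (⟪η, ζ⟫ : ℝ) = (jap m η * jap m ζ) * ⟪nhat m η, nhat m ζ⟫ := by
    rw [nhat, nhat, real_inner_smul_left, real_inner_smul_right]
    field_simp
  have hnη : ‖η‖ = jap m η * ‖nhat m η‖ := by
    rw [nhat, norm_smul, Real.norm_eq_abs, abs_inv, _root_.abs_of_nonneg (le_of_lt hJη)]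
    field_simp
  have hnζ : ‖ζ‖ = jap m ζ * ‖nhat m ζ‖ := by
    rw [nhat, norm_smul, Real.norm_eq_abs, abs_inv, _root_.abs_of_nonneg (le_of_lt hJζ)]
    field_simp
  have hsub : ‖η - ζ‖ ^ 2 = ‖η‖ ^ 2 - 2 * ⟪η, ζ⟫ + ‖ζ‖ ^ 2 := norm_sub_sq_real η ζ
  have hDf : ∀ ε : Bool,
      0 ≤ ‖nhat m η‖ * ‖nhat m ζ‖ - sg ε * ⟪nhat m η, nhat m ζ⟫ ∧
      ‖nhat m η‖ * ‖nhat m ζ‖ - sg ε * ⟪nhat m η, nhat m ζ⟫ ≤ 2 := by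
    intro ε
    obtain ⟨hP0, hP1, hQ0, hQ1, hCS, hspm⟩ := qsetup m ε η ζ
    exact D_facts _ _ _ _ hP0 hP1 hQ0 hQ1 hCS hspm
  constructor
  · -- the `+` bound
    have hnum : (‖nhat m η‖ * ‖nhat m ζ‖ - ⟪nhat m η, nhat m ζ⟫) * (jap m η * jap m ζ) =
        ‖η‖ * ‖ζ‖ - ⟪η, ζ⟫ := by
      rw [hnη, hnζ, hinner]; ring
    have hDX : ‖nhat m η‖ * ‖nhat m ζ‖ - sg true * ⟪nhat m η, nhat m ζ⟫ ≤
        (‖η - ζ‖ * (‖η - ζ‖ - |‖η‖ - ‖ζ‖|)) / (jap m η * jap m ζ) := by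
      rw [show sg true = 1 from rfl, one_mul, le_div_iff₀ (mul_pos hJη hJζ), hnum]
      have htr : |‖η‖ - ‖ζ‖| ≤ ‖η - ζ‖ := abs_norm_sub_norm_le η ζ
      nlinarith [sq_nonneg (‖η - ζ‖ - |‖η‖ - ‖ζ‖|), _root_.sq_abs (‖η‖ - ‖ζ‖), hsub, htr,
        norm_nonneg (η - ζ)]
    exact rpow_combine _ _ _ a (hDf true).1 (hDf true).2 hDX
      (matNorm_qSymb_le m true η ζ j) ha0 ha1
  · -- the `-` bound
    have hnum : (‖nhat m η‖ * ‖nhat m ζ‖ + ⟪nhat m η, nhat m ζ⟫) * (jap m η * jap m ζ) =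
        ‖η‖ * ‖ζ‖ + ⟪η, ζ⟫ := by
      rw [hnη, hnζ, hinner]; ring
    have hDX : ‖nhat m η‖ * ‖nhat m ζ‖ - sg false * ⟪nhat m η, nhat m ζ⟫ ≤
        ((‖η‖ + ‖ζ‖) * (‖η‖ + ‖ζ‖ - ‖η - ζ‖)) / (jap m η * jap m ζ) := by
      rw [show sg false = -1 from rfl, show ‖nhat m η‖ * ‖nhat m ζ‖ -
          (-1) * ⟪nhat m η, nhat m ζ⟫ =
          ‖nhat m η‖ * ‖nhat m ζ‖ + ⟪nhat m η, nhat m ζ⟫ by ring,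
        le_div_iff₀ (mul_pos hJη hJζ), hnum]
      have htr : ‖η - ζ‖ ≤ ‖η‖ + ‖ζ‖ := norm_sub_le η ζ
      nlinarith [sq_nonneg (‖η‖ + ‖ζ‖ - ‖η - ζ‖), hsub, htr, norm_nonneg (η - ζ)]
    exact rpow_combine _ _ _ a (hDf false).1 (hDf false).2 hDX
      (matNorm_qSymb_le m false η ζ j) ha0 ha1

end Dirac3D
end
end
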